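/- For every list xs : List Turn, interleaving lr distributes over the unfold step with middle element L: lr ▷ (xs ++ [L] ++ List.map inv (List.reverse xs)) = (lr ▷ xs) ++ [L] ++ List.map inv (List.reverse (lr ▷ xs)). -/
import Mathlib

inductive Turn : Type
  | L
  | R
deriving DecidableEq

open Turn

def inv : Turn → Turn
  | L => R
  | R => L

def interleave {α : Type*} : Stream' α → List α → List α
  | zs, [] => [zs.head]
  | zs, y :: ys => zs.head :: y :: interleave zs.tail ys

infixr:67 " ▷ " => interleave

def lr : Stream' Turn := fun n => if n % 2 = 0 then L else R

def rl : Stream' Turn := fun n => if n % 2 = 0 then R else L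

lemma drop_head (n : ℕ) (s : Stream' Turn) : (s.drop n).head = s n := by
  simp [Stream'.head, Stream'.drop, Stream'.get]
lemma drop_tail (n : ℕ) (s : Stream' Turn) : (s.drop n).tail = s.drop (n+1) := by
  funext i; simp [Stream'.drop, Stream'.tail, Stream'.get]; ring_nf

lemma interleave_snoc {α : Type*} (xs : List α) (zs : Stream' α) (y : α) :
    zs ▷ (xs ++ [y]) = (zs ▷ xs) ++ [y, zs (xs.length + 1)] := by
  induction xs generalizing zs with
  | nil => rfl
  | cons x xs ih =>
      simp [interleave, ih]
      all_goals rfl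

lemma interleave_append_cons {α : Type*} (xs : List α) (zs : Stream' α) (y : α) (ys : List α) :
    zs ▷ (xs ++ y :: ys) = (zs ▷ xs) ++ y :: (zs.drop (xs.length + 1) ▷ ys) := by
  induction xs generalizing zs with
  | nil => simp [interleave]; all_goals rfl
  | cons x xs ih =>
      simp [interleave, ih]

lemma interleave_map {α β : Type*} (f : α → β) (xs : List α) (zs : Stream' α) :
    (zs ▷ xs).map f = (zs.map f) ▷ (xs.map f) := by
  induction xs generalizing zs with
  | nil => rfl
  | cons x xs ih => simp [interleave, ih]

lemma lr_period (k : ℕ) : lr (k + 2) = lr k := by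
  simp [lr, Nat.add_mod]

lemma rev_lem (ys : List Turn) (n : ℕ) :
    (lr.drop n ▷ ys).reverse = lr.drop (n + ys.length) ▷ ys.reverse := by
  induction ys generalizing n with
  | nil => rfl
  | cons y ys ih =>
      simp only [interleave, List.reverse_cons, drop_head, drop_tail, List.reverse_cons']
      rw [ih (n+1), interleave_snoc]
      have h1 : n + 1 + ys.length = n + (y :: ys).length := by simp; ring
      rw [h1]
      have h2 : Stream'.drop (n + (y :: ys).length) lr (ys.reverse.length + 1) = lr n := by
        have hm : (ys.reverse.length + 1 + (n + (y :: ys).length)) % 2 = n % 2 := by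
          simp; omega
        simp only [Stream'.drop, Stream'.get, lr, List.length_cons]
        simp only [show (ys.reverse.length + 1 + (n + (ys.length + 1))) % 2 = n % 2 from by
          simp; omega]
      rw [h2]
      simp

lemma map_inv_drop (n : ℕ) : Stream'.map inv (lr.drop n) = lr.drop (n + 1) := by
  funext i
  show inv (lr (i + n)) = lr (i + (n + 1))
  rcases Nat.mod_two_eq_zero_or_one (i + n) with h | h
  · simp [lr, h, show (i + (n + 1)) % 2 = 1 from by omega, inv]
  · simp [lr, h, show (i + (n + 1)) % 2 = 0 from by omega, inv]

lemma lr_drop_zero : lr = lr.drop 0 := by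
  funext i
  show lr i = lr (i + 0)
  rw [Nat.add_zero]

theorem interleave_lr_unfold_step (xs : List Turn) :
    lr ▷ (xs ++ [L] ++ List.map inv (List.reverse xs)) =
      (lr ▷ xs) ++ [L] ++ List.map inv (List.reverse (lr ▷ xs)) := by
  rw [List.append_assoc, List.singleton_append, interleave_append_cons]
  have hrev : (lr ▷ xs).reverse = lr.drop xs.length ▷ xs.reverse := by
    rw [lr_drop_zero, rev_lem, Nat.zero_add, ← lr_drop_zero]
  rw [hrev, interleave_map, map_inv_drop]
  simp
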